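/- Let H be a real Hilbert space and A : H →L[ℝ] H a bounded nonnegative selfadjoint operator. Define the bilinear form ⟪(f₁,g₁),(f₂,g₂)⟫_H = ⟨A f₁, f₂⟩ + (1/4)⟨f₁, f₂⟩ + ⟨g₁ + (1/2) f₁, g₂ + (1/2) f₂⟩ on H × H, and L(f,g) = (g, −A f − g). Then for all f, g ∈ H one has ⟪L(f,g), (f,g)⟫_H = −(1/2)(⟨A f, f⟩ + ‖g‖²); in particular −L is accretive with respect to this inner product. -/

import Mathlib

open scoped RealInnerProductSpace

noncomputable def energyInner {H : Type*} [NormedAddCommGroup H] [InnerProductSpace ℝ H]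
    (A : H →ₗ[ℝ] H) (p q : H × H) : ℝ :=
  ⟪A p.1, q.1⟫ + (1 / 4) * ⟪p.1, q.1⟫ + ⟪p.2 + (1 / 2 : ℝ) • p.1, q.2 + (1 / 2 : ℝ) • q.1⟫

/- Expanding, the cross terms `(1/4)⟪g, f⟫` cancel and symmetry of `A` cancels
`⟪A g, f⟫` against `-⟪A f, g⟫`. -/
theorem LinearMap.IsSymmetric.energyInner_generator_self {H : Type*} [NormedAddCommGroup H]
    [InnerProductSpace ℝ H] {A : H →ₗ[ℝ] H} (hA : A.IsSymmetric) (f g : H) :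
    energyInner A (g, -A f - g) (f, g) = -(1 / 2) * (⟪A f, f⟫ + ‖g‖ ^ 2) := by
  have hsymm : ⟪A g, f⟫ = ⟪A f, g⟫ := by rw [hA, real_inner_comm]
  simp only [energyInner, inner_add_left, inner_add_right, inner_sub_left, inner_neg_left,
    inner_smul_left, inner_smul_right, real_inner_self_eq_norm_sq, conj_trivial]
  linarith [hsymm, real_inner_comm f g]

theorem stmt_1 {H : Type*} [NormedAddCommGroup H] [InnerProductSpace ℝ H] [CompleteSpace H]
    (A : H →L[ℝ] H) (hA : IsSelfAdjoint A)
    (f g : H) :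
    (fun (p q : H × H) =>
        ⟪A p.1, q.1⟫ + (1 / 4) * ⟪p.1, q.1⟫
          + ⟪p.2 + (1 / 2 : ℝ) • p.1, q.2 + (1 / 2 : ℝ) • q.1⟫)
      ((g, -A f - g) : H × H) ((f, g) : H × H)
      = -(1 / 2) * (⟪A f, f⟫ + ‖g‖ ^ 2) :=
  hA.isSymmetric.energyInner_generator_self f g
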